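/- arXiv:1811.12360 — 6 statements merged into one kernel-verified Lean document; each statement's English description precedes it below -/
import Mathlib

section
/- γ_gr(G;C) ≤ n − δ(G;C) + 1, where n = |V| and δ(G;C) := min_{v∈V} |N⟨v⟩|. -/
namespace LegalSeq

variable {V : Type*}

/-- The generalized neighborhood `N⟨v⟩`: the closed neighborhood of `v` if `v ∈ C`,
the open neighborhood otherwise. -/
noncomputable def gN [Fintype V] (G : SimpleGraph V) (C : Set V) (v : V) : Finset V := by
  classical
  exact (Set.toFinite (if v ∈ C then insert v (G.neighborSet v) else G.neighborSet v)).toFinset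

/-- Union of the generalized neighborhoods of the vertices of a list. -/
noncomputable def nUnion [Fintype V] (G : SimpleGraph V) (C : Set V) (l : List V) : Finset V := by
  classical
  exact l.toFinset.biUnion (gN G C)

/-- A list of pairwise distinct vertices is a legal sequence if every vertex of the sequence,
except possibly the first one, has a generalized neighbor that is not in the generalized
neighborhood of any preceding vertex. -/
def IsLegal [Fintype V] (G : SimpleGraph V) (C : Set V) (l : List V) : Prop :=
  l.Nodup ∧ ∀ (i : ℕ) (h : i < l.length), 0 < i →
    ¬ (gN G C (l.get ⟨i, h⟩) ⊆ nUnion G C (l.take i))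

/-- A sequence is dominating if the generalized neighborhoods of its members cover all vertices. -/
def IsDom [Fintype V] (G : SimpleGraph V) (C : Set V) (l : List V) : Prop :=
  nUnion G C l = Finset.univ

/-- The Grundy domination number of the instance `(G; C)`: the maximum length of a sequence
that is both legal and dominating. -/
noncomputable def grundy [Fintype V] (G : SimpleGraph V) (C : Set V) : ℕ :=
  sSup {k : ℕ | ∃ l : List V, IsLegal G C l ∧ IsDom G C l ∧ l.length = k}

/-- `δ(G;C)`, the minimum cardinality of a generalized neighborhood. -/
noncomputable def gdelta [Fintype V] (G : SimpleGraph V) (C : Set V) : ℕ :=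
  sInf (Set.range fun v : V => (gN G C v).card)

/-! Along a legal sequence `(v₁, …, v_k)` the union `N⟨v₁⟩ ∪ … ∪ N⟨vᵢ⟩` starts with at least
`δ(G;C)` vertices and strictly grows at every later step, so at the end it has at least
`δ(G;C) + k - 1` of the `n` vertices. -/

section

variable [Fintype V] (G : SimpleGraph V) (C : Set V)

lemma gdelta_le_card_gN (v : V) : gdelta G C ≤ (gN G C v).card :=
  Nat.sInf_le (Set.mem_range_self v)

lemma nUnion_append [DecidableEq V] (a b : List V) :
    nUnion G C (a ++ b) = nUnion G C a ∪ nUnion G C b := by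
  ext x
  simp only [nUnion, Finset.mem_biUnion, List.mem_toFinset, List.mem_append, Finset.mem_union]
  grind

lemma nUnion_take_succ [DecidableEq V] (l : List V) {i : ℕ} (h : i < l.length) :
    nUnion G C (l.take (i + 1)) = nUnion G C (l.take i) ∪ gN G C (l.get ⟨i, h⟩) := by
  rw [← List.take_concat_get h, List.concat_eq_append, nUnion_append]
  simp [nUnion]

variable {G C}

lemma IsLegal.card_nUnion_take_lt {l : List V} (hl : IsLegal G C l) {i : ℕ}
    (h : i < l.length) (hi : 0 < i) :
    (nUnion G C (l.take i)).card < (nUnion G C (l.take (i + 1))).card := by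
  classical
  obtain ⟨x, hx, hxn⟩ := Finset.not_subset.mp (hl.2 i h hi)
  rw [nUnion_take_succ G C l h]
  exact Finset.card_lt_card <|
    Finset.ssubset_iff_of_subset Finset.subset_union_left |>.mpr
      ⟨x, Finset.mem_union_right _ hx, hxn⟩

lemma IsLegal.gdelta_add_le_card_nUnion_take {l : List V} (hl : IsLegal G C l) {i : ℕ}
    (h : i < l.length) : gdelta G C + i ≤ (nUnion G C (l.take (i + 1))).card := by
  classical
  induction i with
  | zero =>
    rw [nUnion_take_succ G C l h]
    exact (gdelta_le_card_gN G C _).trans (Finset.card_le_card Finset.subset_union_right)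
  | succ i ih =>
    have := hl.card_nUnion_take_lt h i.succ_pos
    have := ih (by omega)
    omega

lemma IsLegal.length_le {l : List V} (hl : IsLegal G C l) :
    l.length ≤ Fintype.card V - gdelta G C + 1 := by
  obtain _ | hpos := l.length.eq_zero_or_pos
  · omega
  have hcover := hl.gdelta_add_le_card_nUnion_take (i := l.length - 1) (by omega)
  rw [Nat.sub_add_cancel hpos, List.take_length] at hcover
  have := Finset.card_le_univ (nUnion G C l)
  omega

end

theorem grundy_le_general [Fintype V] (G : SimpleGraph V) (C : Set V) :
    grundy G C ≤ Fintype.card V - gdelta G C + 1 := by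
  apply csSup_le'
  rintro k ⟨l, hl, -, rfl⟩
  exact hl.length_le

/-- `γ_gr(G;C) ≤ n − δ(G;C) + 1`. -/
theorem grundy_le [Fintype V] [Nonempty V] (G : SimpleGraph V) (C : Set V)
    (hiso : ∀ w : V, w ∉ C → ∃ z, G.Adj w z) :
    grundy G C ≤ Fintype.card V - gdelta G C + 1 :=
  grundy_le_general G C

end LegalSeq
end

section
/- Let n ≥ 1, let G = P_n be the path on vertices {1,…,n}, and let C ⊆ {1,…,n} be such that every vertex of {1,…,n} ∖ C has at least one neighbor in P_n. If C is a good configuration for P_n, then γ_gr(P_n;C) = n; otherwise, γ_gr(P_n;C) = n − 1. -/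
/-!
A legal dominating sequence of length `|V|` is the same as a bijection `f` with `f v ∈ N⟨v⟩`
(the vertex footprinted by `v`) together with an order in which `v` comes before every other
`u` with `f v ∈ N⟨u⟩`. On a path such an `f` is a product of fixed points, which must lie in `C`,
and swaps of adjacent vertices. If both ends of the path lie in `C`, the order constraints coming
from the right end propagate leftwards block by block and close up into a cycle at the left end;
so the blocks can be peeled off the ends exactly as in the definition of a good configuration, and
conversely a good configuration yields such an `f` and order. Otherwise the vertices `1, …, n − 1`,
each footprinting its right neighbour, form a legal dominating sequence of length `n − 1`.
-/

namespace LegalSeq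

variable {V : Type*}

/-- The path graph `P_n` on the vertex set `{1, …, n}`, with edges `{i, i+1}`. -/
def pathG (n : ℕ) : SimpleGraph ↥(Set.Icc 1 n) where
  Adj u v := (u : ℕ) + 1 = (v : ℕ) ∨ (v : ℕ) + 1 = (u : ℕ)
  symm := ⟨by intro u v h; tauto⟩
  loopless := ⟨by intro u h; rcases h with h | h <;> omega⟩

/-- `GoodConf C a b` : `C` is a good configuration for the path with vertex set `{a, …, b}`
(labels taken in `ℕ`, edges between consecutive integers). -/
inductive GoodConf (C : Set ℕ) : ℕ → ℕ → Prop
  | single (a : ℕ) (h : a ∈ C) : GoodConf C a a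
  | pair (a : ℕ) (h : ¬(a ∈ C ∧ a + 1 ∈ C)) : GoodConf C a (a + 1)
  | left (a b : ℕ) (h : a + 2 ≤ b) (ha : a ∉ C) (hg : GoodConf C (a + 2) b) : GoodConf C a b
  | right (a b : ℕ) (h : a + 2 ≤ b) (hb : b ∉ C) (hg : GoodConf C a (b - 2)) : GoodConf C a b

section Graph

variable [Fintype V] {G : SimpleGraph V} {C : Set V}

theorem mem_gN {u v : V} : u ∈ gN G C v ↔ G.Adj v u ∨ (u = v ∧ v ∈ C) := by
  classical
  simp only [gN, Set.Finite.mem_toFinset]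
  split_ifs with hv <;> simp [hv, or_comm]

theorem mem_gN_comm {u v : V} : u ∈ gN G C v ↔ v ∈ gN G C u := by
  simp only [mem_gN, G.adj_comm]
  constructor <;> rintro (h | ⟨rfl, h⟩) <;> simp_all

theorem mem_nUnion {u : V} {l : List V} : u ∈ nUnion G C l ↔ ∃ v ∈ l, u ∈ gN G C v := by
  classical
  simp [nUnion]

theorem mem_nUnion_take {u : V} {l : List V} {i : ℕ} :
    u ∈ nUnion G C (l.take i) ↔ ∃ (j : ℕ) (hj : j < l.length), j < i ∧ u ∈ gN G C l[j] := by
  simp only [mem_nUnion, List.mem_take_iff_getElem]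
  constructor
  · rintro ⟨_, ⟨j, hj, rfl⟩, hu⟩
    exact ⟨j, by omega, by omega, hu⟩
  · rintro ⟨j, hj, hji, hu⟩
    exact ⟨_, ⟨j, by omega, rfl⟩, hu⟩

theorem IsDom.nonempty_gN {l : List V} (hd : IsDom G C l) (v : V) : (gN G C v).Nonempty := by
  obtain ⟨u, -, hv⟩ := mem_nUnion.1 (hd ▸ Finset.mem_univ v)
  exact ⟨u, mem_gN_comm.1 hv⟩

/-- `f v` is the vertex footprinted by `v` (first dominated by `v`) and `σ v` the time at which
`v` is played. -/
structure IsPerfectWitness (G : SimpleGraph V) (C : Set V) (f : V → V) (σ : V → ℕ) : Prop where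
  mem_gN : ∀ v, f v ∈ gN G C v
  injective : Function.Injective f
  lt_of_mem_gN : ∀ v w, v ≠ w → f w ∈ gN G C v → σ w < σ v

theorem IsPerfectWitness.exists_isLegal_isDom {f : V → V} {σ : V → ℕ}
    (h : IsPerfectWitness G C f σ) :
    ∃ l, IsLegal G C l ∧ IsDom G C l ∧ l.length = Fintype.card V := by
  classical
  set l := Finset.univ.toList.mergeSort (fun u v => decide (σ u ≤ σ v))
  have hperm : l.Perm Finset.univ.toList := List.mergeSort_perm _ _
  have hnodup : l.Nodup := hperm.nodup_iff.2 (Finset.nodup_toList _)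
  have hsorted : ∀ i j (hi : i < l.length) (hj : j < l.length), i < j → σ l[i] ≤ σ l[j] := by
    have := List.pairwise_mergeSort (le := fun u v => decide (σ u ≤ σ v))
      (fun _ _ _ => by simp only [decide_eq_true_eq]; omega)
      (fun _ _ => by simp only [Bool.or_eq_true, decide_eq_true_eq]; omega) Finset.univ.toList
    intro i j hi hj hij
    simpa using List.pairwise_iff_getElem.1 this i j hi hj hij
  refine ⟨l, ⟨hnodup, fun i hi _ hsub => ?_⟩, ?_, by simp [hperm.length_eq]⟩
  · obtain ⟨j, hj, hji, hmem⟩ := mem_nUnion_take.1 (hsub (h.mem_gN l[i]))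
    have hne : l[j] ≠ l[i] := fun he => hji.ne (hnodup.getElem_inj_iff.1 he)
    have := h.lt_of_mem_gN _ _ hne hmem
    have := hsorted j i hj hi hji
    omega
  · refine Finset.eq_univ_iff_forall.2 fun u => ?_
    obtain ⟨v, rfl⟩ := Finite.injective_iff_surjective.1 h.injective u
    exact mem_nUnion.2 ⟨v, hperm.mem_iff.2 (Finset.mem_toList.2 (Finset.mem_univ v)), h.mem_gN v⟩

theorem IsLegal.exists_isPerfectWitness {l : List V} (hl : IsLegal G C l) (hd : IsDom G C l)
    (hlen : l.length = Fintype.card V) : ∃ f σ, IsPerfectWitness G C f σ := by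
  classical
  have hmem : ∀ v, v ∈ l := by
    have := Finset.eq_univ_of_card _ (by rw [List.toFinset_card_of_nodup hl.1, hlen])
    exact fun v => List.mem_toFinset.1 (this ▸ Finset.mem_univ v)
  have hfresh : ∀ v, ∃ x ∈ gN G C v, ∀ u ∈ l.take (l.idxOf v), x ∉ gN G C u := by
    intro v
    by_cases h0 : l.idxOf v = 0
    · obtain ⟨x, hx⟩ := hd.nonempty_gN v
      exact ⟨x, hx, by simp [h0]⟩
    · have hv := List.idxOf_lt_length_iff.2 (hmem v)
      obtain ⟨x, hx, hxn⟩ := Finset.not_subset.1 (hl.2 _ hv (Nat.pos_of_ne_zero h0))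
      rw [List.get_eq_getElem, List.getElem_idxOf] at hx
      exact ⟨x, hx, fun u hu hxu => hxn (mem_nUnion.2 ⟨u, hu, hxu⟩)⟩
  choose f hf hfresh using hfresh
  have hbefore {v w : V} (h : l.idxOf v < l.idxOf w) : v ∈ l.take (l.idxOf w) :=
    (List.mem_take_iff_idxOf_lt (hmem v)).2 h
  have hidx_ne {v w : V} (h : v ≠ w) : l.idxOf v ≠ l.idxOf w := mt (List.idxOf_inj (hmem v)).1 h
  refine ⟨f, l.idxOf, fun v => hf v, fun v w hvw => ?_, fun v w hvw hw => ?_⟩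
  · by_contra hne
    rcases (hidx_ne hne).lt_or_gt with hlt | hlt
    · exact hfresh w v (hbefore hlt) (hvw ▸ hf v)
    · exact hfresh v w (hbefore hlt) (hvw ▸ hf w)
  · by_contra! hle
    exact hfresh w v (hbefore (lt_of_le_of_ne hle (hidx_ne hvw))) hw

theorem grundy_le_card : grundy G C ≤ Fintype.card V :=
  csSup_le' (by rintro _ ⟨l, hl, -, rfl⟩; exact hl.1.length_le_card)

theorem le_grundy {l : List V} (hl : IsLegal G C l) (hd : IsDom G C l) : l.length ≤ grundy G C :=
  le_csSup ⟨_, by rintro _ ⟨l, hl, -, rfl⟩; exact hl.1.length_le_card⟩ ⟨l, hl, hd, rfl⟩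

theorem grundy_eq_card_iff : grundy G C = Fintype.card V ↔ ∃ f σ, IsPerfectWitness G C f σ := by
  refine ⟨fun h => ?_, fun ⟨f, σ, hw⟩ => ?_⟩
  · obtain ⟨l, hl, hd, hlen⟩ :
        ∃ l, IsLegal G C l ∧ IsDom G C l ∧ l.length = Fintype.card V := by
      rcases Set.eq_empty_or_nonempty
        {k | ∃ l : List V, IsLegal G C l ∧ IsDom G C l ∧ l.length = k} with he | hne
      · have hV : IsEmpty V := by
          rw [← Fintype.card_eq_zero_iff, ← h, grundy, he, csSup_empty, bot_eq_zero]
        refine ⟨[], ⟨List.nodup_nil, by simp⟩, ?_, by simp⟩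
        exact Finset.eq_univ_iff_forall.2 isEmptyElim
      · exact h ▸ Nat.sSup_mem hne ⟨_, by rintro _ ⟨l, hl, -, rfl⟩; exact hl.1.length_le_card⟩
    exact hl.exists_isPerfectWitness hd hlen
  · obtain ⟨l, hl, hd, hlen⟩ := hw.exists_isLegal_isDom
    exact le_antisymm grundy_le_card (hlen ▸ le_grundy hl hd)

end Graph

/-- `u ∈ N⟨v⟩` for the path on all of `ℕ`. -/
def PathNbr (C : Set ℕ) (v u : ℕ) : Prop := u = v + 1 ∨ u + 1 = v ∨ (u = v ∧ v ∈ C)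

@[simp]
theorem pathNbr_self {C : Set ℕ} {v : ℕ} : PathNbr C v v ↔ v ∈ C := by
  simp [PathNbr]

theorem mem_gN_pathG {n : ℕ} {C : Set ℕ} {u v : Set.Icc 1 n} :
    u ∈ gN (pathG n) {x | (x : ℕ) ∈ C} v ↔ PathNbr C v u := by
  rw [mem_gN, PathNbr, Subtype.ext_iff]
  simp only [pathG, Set.mem_ofPred_eq]
  rw [or_assoc, @eq_comm _ ((v : ℕ) + 1)]

/-- The ℕ-valued form, on an interval `[a, b]`, of an `IsPerfectWitness` for a path. -/
structure PathWitness (C : Set ℕ) (a b : ℕ) (f σ : ℕ → ℕ) : Prop where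
  mapsTo : Set.MapsTo f (Set.Icc a b) (Set.Icc a b)
  injOn : Set.InjOn f (Set.Icc a b)
  nbr : ∀ v ∈ Set.Icc a b, PathNbr C v (f v)
  lt_of_nbr : ∀ v ∈ Set.Icc a b, ∀ w ∈ Set.Icc a b, v ≠ w → PathNbr C v (f w) → σ w < σ v

namespace PathWitness

variable {C : Set ℕ} {a b : ℕ} {f σ : ℕ → ℕ}

theorem mono (h : PathWitness C a b f σ) {a' b' : ℕ} (ha : a ≤ a') (hb : b' ≤ b)
    (hmaps : Set.MapsTo f (Set.Icc a' b') (Set.Icc a' b')) : PathWitness C a' b' f σ :=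
  have hsub := Set.Icc_subset_Icc ha hb
  ⟨hmaps, h.injOn.mono hsub, fun v hv => h.nbr v (hsub hv),
    fun v hv w hw => h.lt_of_nbr v (hsub hv) w (hsub hw)⟩

theorem dropLeft (h : PathWitness C a b f σ) {c : ℕ} (hfa : f a = c) (hac : a ≤ c)
    (hca : c ≤ a + 1) (hcb : c < b) : PathWitness C (c + 1) b f σ := by
  refine h.mono (by omega) le_rfl fun v ⟨hv1, hv2⟩ => ?_
  have hv : v ∈ Set.Icc a b := ⟨by omega, hv2⟩
  have hne := h.injOn.ne hv ⟨le_rfl, by omega⟩ (by omega)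
  obtain ⟨-, hfv⟩ := h.mapsTo hv
  have := h.nbr v hv
  simp only [PathNbr] at this
  exact ⟨by omega, hfv⟩

theorem dropRight (h : PathWitness C a b f σ) {c : ℕ} (hfb : f b = c) (hcb : c ≤ b)
    (hbc : b ≤ c + 1) (hac : a < c) : PathWitness C a (c - 1) f σ := by
  refine h.mono le_rfl (by omega) fun v ⟨hv1, hv2⟩ => ?_
  have hv : v ∈ Set.Icc a b := ⟨hv1, by omega⟩
  have hne := h.injOn.ne hv ⟨by omega, le_rfl⟩ (by omega)
  obtain ⟨hfv, -⟩ := h.mapsTo hv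
  have := h.nbr v hv
  simp only [PathNbr] at this
  exact ⟨hfv, by omega⟩

theorem left_block (h : PathWitness C a b f σ) (hab : a < b) :
    f a = a ∨ (f a = a + 1 ∧ f (a + 1) = a) := by
  have ha : a ∈ Set.Icc a b := ⟨le_rfl, hab.le⟩
  obtain ⟨v, hv, hfv⟩ :=
    ((Set.finite_Icc a b).injOn_iff_bijOn_of_mapsTo h.mapsTo).1 h.injOn |>.surjOn ha
  have hfa := h.nbr a ha
  obtain ⟨hfa1, -⟩ := h.mapsTo ha
  simp only [PathNbr] at hfa
  rcases h.nbr v hv with hva | hva | ⟨hva, -⟩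
  · exact absurd hv.1 (by omega)
  · obtain rfl : v = a + 1 := by omega
    have hne := h.injOn.ne ha ⟨by omega, hab⟩ (by omega : a ≠ a + 1)
    omega
  · obtain rfl : v = a := by omega
    exact .inl hfv

/-- The constraint `σ a < σ (a + 1)` created at the right end by `b ∈ C` is carried leftwards
one block at a time. -/
theorem swap_left_of_mem_right {a b : ℕ} (h : PathWitness C a b f σ) (hb : b ∈ C) (hab : a < b) :
    f a = a + 1 ∧ f (a + 1) = a ∧ σ a < σ (a + 1) := by
  have ord (v w : ℕ) (hv : a ≤ v ∧ v ≤ b) (hw : a ≤ w ∧ w ≤ b) (hvw : v ≠ w)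
      (hn : PathNbr C v (f w)) : σ w < σ v := h.lt_of_nbr v hv w hw hvw hn
  have ha : a ∈ Set.Icc a b := ⟨le_rfl, hab.le⟩
  obtain ⟨hfb₁, hfb₂⟩ := h.mapsTo (Set.right_mem_Icc.2 hab.le)
  rcases h.left_block hab with hfa | ⟨hfa, hfa1⟩
  · exfalso
    by_cases hb1 : a + 1 = b
    · subst hb1
      have := h.injOn.ne ha (Set.right_mem_Icc.2 hab.le) hab.ne
      have hfb : f (a + 1) = a + 1 := by omega
      have := ord (a + 1) a (by omega) (by omega) (by omega) (by simp [PathNbr, hfa])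
      have := ord a (a + 1) (by omega) (by omega) (by omega) (by simp [PathNbr, hfb])
      omega
    · obtain ⟨-, h2, h3⟩ : f (a + 1) = a + 2 ∧ f (a + 2) = a + 1 ∧ σ (a + 1) < σ (a + 2) :=
        (h.dropLeft hfa le_rfl (by omega) hab).swap_left_of_mem_right hb (by omega)
      have := ord (a + 1) a (by omega) (by omega) (by omega) (by simp [PathNbr, hfa])
      have := ord a (a + 2) (by omega) (by omega) (by omega) (by simp [PathNbr, h2])
      omega
  · refine ⟨hfa, hfa1, ?_⟩
    by_cases hb1 : a + 1 = b
    · exact ord (a + 1) a (by omega) (by omega) (by omega) (by simp [PathNbr, hfa, hb1, hb])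
    by_cases hb2 : a + 2 = b
    · subst hb2
      have := h.injOn.ne ha (Set.right_mem_Icc.2 hab.le) hab.ne
      have := h.injOn.ne ⟨(by omega : a ≤ a + 1), (by omega)⟩ (Set.right_mem_Icc.2 hab.le)
        (by omega : a + 1 ≠ a + 2)
      have hfb : f (a + 2) = a + 2 := by omega
      have := ord (a + 2) a (by omega) (by omega) (by omega) (by simp [PathNbr, hfa])
      have := ord (a + 1) (a + 2) (by omega) (by omega) (by omega) (by simp [PathNbr, hfb])
      omega
    · obtain ⟨-, h2, h3⟩ : f (a + 2) = a + 3 ∧ f (a + 3) = a + 2 ∧ σ (a + 2) < σ (a + 3) :=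
        (h.dropLeft hfa (by omega) le_rfl (by omega)).swap_left_of_mem_right hb (by omega)
      have := ord (a + 2) a (by omega) (by omega) (by omega) (by simp [PathNbr, hfa])
      have := ord (a + 1) (a + 3) (by omega) (by omega) (by omega) (by simp [PathNbr, h2])
      omega
termination_by b - a

theorem eq_of_mem_of_mem (h : PathWitness C a b f σ) (hab : a ≤ b) (ha : a ∈ C)
    (hb : b ∈ C) : a = b := by
  by_contra hne
  obtain ⟨-, hfa1, hlt⟩ := h.swap_left_of_mem_right hb (lt_of_le_of_ne hab hne)
  have := h.lt_of_nbr a ⟨le_rfl, hab⟩ (a + 1) ⟨by omega, by omega⟩ (by omega)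
    (by simp [hfa1, ha])
  omega

theorem goodConf {a b : ℕ} (h : PathWitness C a b f σ) (hab : a ≤ b) : GoodConf C a b := by
  have mem_of_fixed {v : ℕ} (hv : v ∈ Set.Icc a b) (hfv : f v = v) : v ∈ C :=
    pathNbr_self.1 (by simpa only [hfv] using h.nbr v hv)
  have ha : a ∈ Set.Icc a b := ⟨le_rfl, hab⟩
  have hb : b ∈ Set.Icc a b := ⟨hab, le_rfl⟩
  obtain ⟨hfa, -⟩ := h.mapsTo ha
  obtain ⟨-, hfb⟩ := h.mapsTo hb
  have hnbr_a := h.nbr a ha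
  have hnbr_b := h.nbr b hb
  simp only [PathNbr] at hnbr_a hnbr_b
  rcases Nat.lt_trichotomy b (a + 1) with hb1 | hb1 | hb1
  · obtain rfl : b = a := by omega
    exact .single _ (mem_of_fixed ha (by omega))
  · subst hb1
    exact .pair a fun ⟨ha', hb'⟩ => absurd (h.eq_of_mem_of_mem hab ha' hb') (by omega)
  · by_cases haC : a ∈ C
    · have hbC : b ∉ C := fun hbC => absurd (h.eq_of_mem_of_mem hab haC hbC) (by omega)
      have : f b = b - 1 := by
        by_contra
        exact hbC (mem_of_fixed hb (by omega))
      exact .right a b (by omega) hbC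
        ((h.dropRight this (by omega) (by omega) (by omega)).goodConf (by omega))
    · have : f a = a + 1 := by
        by_contra
        exact haC (mem_of_fixed ha (by omega))
      exact .left a b (by omega) haC
        ((h.dropLeft this (by omega) le_rfl (by omega)).goodConf (by omega))
termination_by b - a

theorem single (ha : a ∈ C) : PathWitness C a a id 0 := by
  refine ⟨fun v hv => hv, Set.injOn_id _, fun v ⟨h1, h2⟩ => ?_,
    fun v ⟨h1, h2⟩ w ⟨h3, h4⟩ hvw => ?_⟩
  · obtain rfl : v = a := by omega
    simpa using ha
  · exact absurd (by omega) hvw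

theorem pair (h : ¬(a ∈ C ∧ a + 1 ∈ C)) :
    PathWitness C a (a + 1) (fun v => 2 * a + 1 - v) (C.indicator 1) := by
  refine ⟨fun v ⟨h1, h2⟩ => ⟨by omega, by omega⟩, fun v ⟨h1, h2⟩ w ⟨h3, h4⟩ he => by omega,
    fun v ⟨h1, h2⟩ => by dsimp only [PathNbr]; omega, fun v ⟨h1, h2⟩ w ⟨h3, h4⟩ hvw hn => ?_⟩
  dsimp only [PathNbr] at hn
  obtain ⟨-, hv⟩ : 2 * a + 1 - w = v ∧ v ∈ C := by
    rcases hn with hn | hn | hn <;> omega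
  have hw : w ∉ C := fun hw => h (by
    rcases (by omega : v = a ∧ w = a + 1 ∨ v = a + 1 ∧ w = a) with ⟨rfl, rfl⟩ | ⟨rfl, rfl⟩
    exacts [⟨hv, hw⟩, ⟨hw, hv⟩])
  simp [hv, hw]

theorem cons (h : PathWitness C (a + 2) b f σ) (hab : a + 1 ≤ b) (ha : a ∉ C) :
    ∃ f' σ', PathWitness C a b f' σ' := by
  set M := (Finset.Icc (a + 2) b).sup σ
  have hrest (v : ℕ) (h1 : a + 2 ≤ v) (h2 : v ≤ b) : a + 2 ≤ f v ∧ f v ≤ b ∧ σ v ≤ M :=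
    ⟨(h.mapsTo ⟨h1, h2⟩).1, (h.mapsTo ⟨h1, h2⟩).2, Finset.le_sup (Finset.mem_Icc.2 ⟨h1, h2⟩)⟩
  -- `a` is played first and `a + 1` last
  refine ⟨fun v => if v = a then a + 1 else if v = a + 1 then a else f v,
    fun v => if v = a then 0 else if v = a + 1 then M + 2 else σ v + 1,
    fun v ⟨h1, h2⟩ => ?_, fun v ⟨h1, h2⟩ w ⟨h3, h4⟩ he => ?_, fun v ⟨h1, h2⟩ => ?_,
    fun v ⟨h1, h2⟩ w ⟨h3, h4⟩ hvw hn => ?_⟩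
  · split_ifs
    · exact ⟨by omega, by omega⟩
    · exact ⟨by omega, by omega⟩
    · have := hrest v (by omega) h2
      exact ⟨by omega, by omega⟩
  · split_ifs at he <;> first | omega | (have := hrest v (by omega) h2; omega) |
      (have := hrest w (by omega) h4; omega) | exact h.injOn ⟨by omega, h2⟩ ⟨by omega, h4⟩ he
  · split_ifs
    · simp only [PathNbr]; omega
    · simp only [PathNbr]; omega
    · exact h.nbr v ⟨by omega, h2⟩
  · have not_nbr_a (v : ℕ) (hv : a ≤ v) (hv1 : v ≠ a + 1) : ¬PathNbr C v a := by
      rintro (h | h | ⟨rfl, hC⟩)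
      exacts [by omega, hv1 h.symm, ha hC]
    split_ifs at hn ⊢ <;> first
      | omega
      | exact absurd hn (not_nbr_a v h1 (by omega))
      | (have := hrest w (by omega) h4; simp only [PathNbr] at hn; omega)
      | (have := h.lt_of_nbr v ⟨by omega, h2⟩ w ⟨by omega, h4⟩ hvw hn; omega)

theorem snoc (h : PathWitness C a (b - 2) f σ) (hab : a + 1 ≤ b) (hb : b ∉ C) :
    ∃ f' σ', PathWitness C a b f' σ' := by
  set M := (Finset.Icc a (b - 2)).sup σ
  have hrest (v : ℕ) (h1 : a ≤ v) (h2 : v ≤ b - 2) : a ≤ f v ∧ f v ≤ b - 2 ∧ σ v ≤ M :=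
    ⟨(h.mapsTo ⟨h1, h2⟩).1, (h.mapsTo ⟨h1, h2⟩).2, Finset.le_sup (Finset.mem_Icc.2 ⟨h1, h2⟩)⟩
  -- `b` is played first and `b - 1` last
  refine ⟨fun v => if v = b then b - 1 else if v = b - 1 then b else f v,
    fun v => if v = b then 0 else if v = b - 1 then M + 2 else σ v + 1,
    fun v ⟨h1, h2⟩ => ?_, fun v ⟨h1, h2⟩ w ⟨h3, h4⟩ he => ?_, fun v ⟨h1, h2⟩ => ?_,
    fun v ⟨h1, h2⟩ w ⟨h3, h4⟩ hvw hn => ?_⟩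
  · split_ifs
    · exact ⟨by omega, by omega⟩
    · exact ⟨by omega, by omega⟩
    · have := hrest v h1 (by omega)
      exact ⟨by omega, by omega⟩
  · split_ifs at he <;> first | omega | (have := hrest v h1 (by omega); omega) |
      (have := hrest w h3 (by omega); omega) | exact h.injOn ⟨h1, by omega⟩ ⟨h3, by omega⟩ he
  · split_ifs
    · simp only [PathNbr]; omega
    · simp only [PathNbr]; omega
    · exact h.nbr v ⟨h1, by omega⟩
  · have not_nbr_b (v : ℕ) (hv : v ≤ b) (hv1 : v ≠ b - 1) : ¬PathNbr C v b := by
      rintro (h | h | ⟨rfl, hC⟩)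
      exacts [by omega, by omega, hb hC]
    split_ifs at hn ⊢ <;> first
      | omega
      | exact absurd hn (not_nbr_b v h2 (by omega))
      | (have := hrest w h3 (by omega); simp only [PathNbr] at hn; omega)
      | (have := h.lt_of_nbr v ⟨h1, by omega⟩ w ⟨h3, by omega⟩ hvw hn; omega)

end PathWitness

theorem GoodConf.exists_pathWitness {C : Set ℕ} {a b : ℕ} (hg : GoodConf C a b) :
    ∃ f σ, PathWitness C a b f σ := by
  induction hg with
  | single a ha => exact ⟨_, _, .single ha⟩
  | pair a h => exact ⟨_, _, .pair h⟩
  | left a b hab ha _ ih =>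
    obtain ⟨f, σ, h⟩ := ih
    exact h.cons (by omega) ha
  | right a b hab hb _ ih =>
    obtain ⟨f, σ, h⟩ := ih
    exact h.snoc (by omega) hb

theorem exists_isPerfectWitness_pathG_iff {n : ℕ} {C : Set ℕ} :
    (∃ f τ, IsPerfectWitness (pathG n) {v | (v : ℕ) ∈ C} f τ) ↔
      ∃ f σ, PathWitness C 1 n f σ := by
  constructor
  · rintro ⟨f, τ, h⟩
    refine ⟨fun x => if hx : x ∈ Set.Icc 1 n then f ⟨x, hx⟩ else x,
      fun x => if hx : x ∈ Set.Icc 1 n then τ ⟨x, hx⟩ else 0, fun x hx => ?_,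
      fun x hx y hy hxy => ?_, fun x hx => ?_, fun x hx y hy hxy hn => ?_⟩
    · simpa only [dif_pos hx] using (f _).2
    · simp only [dif_pos hx, dif_pos hy] at hxy
      exact congrArg Subtype.val (h.injective (Subtype.ext hxy))
    · simpa only [dif_pos hx] using mem_gN_pathG.1 (h.mem_gN ⟨x, hx⟩)
    · simp only [dif_pos hx, dif_pos hy] at hn ⊢
      exact h.lt_of_mem_gN ⟨x, hx⟩ ⟨y, hy⟩ (by simpa using hxy) (mem_gN_pathG.2 hn)
  · rintro ⟨f, σ, h⟩
    exact ⟨fun v => ⟨f v, h.mapsTo v.2⟩, fun v => σ v, fun v => mem_gN_pathG.2 (h.nbr v v.2),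
      fun v w he => Subtype.ext (h.injOn v.2 w.2 (congrArg Subtype.val he)),
      fun v w hvw hn => h.lt_of_nbr v v.2 w w.2 (Subtype.coe_ne_coe.2 hvw) (mem_gN_pathG.1 hn)⟩

theorem sub_one_le_grundy_pathG {n : ℕ} {C : Set ℕ} (h : ¬GoodConf C 1 n) :
    n - 1 ≤ grundy (pathG n) {v : Set.Icc 1 n | (v : ℕ) ∈ C} := by
  rcases Nat.lt_or_ge n 2 with hn | hn
  · omega
  have h1 : n = 2 → 1 ∈ C := by
    rintro rfl
    by_contra h1
    exact h (.pair 1 fun h' => h1 h'.1)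
  set l : List (Set.Icc 1 n) := List.ofFn fun i : Fin (n - 1) => ⟨i + 1, by omega, by omega⟩
  have hget (i : ℕ) (hi : i < l.length) : (l[i] : ℕ) = i + 1 := by simp [l]
  have hlen : l.length = n - 1 := by simp [l]
  refine hlen ▸ le_grundy ⟨?_, fun i hi _ hsub => ?_⟩ ?_
  · refine List.nodup_iff_injective_get.2 fun i j hij => Fin.ext ?_
    have := congrArg Subtype.val hij
    simp only [List.get_eq_getElem, hget] at this
    omega
  · have hnew : (⟨i + 2, by omega, by omega⟩ : Set.Icc 1 n) ∈
        gN (pathG n) {v : Set.Icc 1 n | (v : ℕ) ∈ C} l[i] :=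
      mem_gN_pathG.2 (.inl (by rw [hget]))
    obtain ⟨j, hj, hji, hmem⟩ := mem_nUnion_take.1 (hsub hnew)
    simp only [mem_gN_pathG, PathNbr, hget] at hmem
    omega
  · refine Finset.eq_univ_iff_forall.2 fun u => mem_nUnion.2 ?_
    obtain ⟨hu1, hu2⟩ := u.2
    by_cases hu : 2 ≤ (u : ℕ)
    · exact ⟨l[(u : ℕ) - 2], List.getElem_mem _, mem_gN_pathG.2 (by rw [PathNbr, hget]; omega)⟩
    by_cases hn3 : 3 ≤ n
    · exact ⟨l[1], List.getElem_mem _, mem_gN_pathG.2 (by rw [PathNbr, hget]; omega)⟩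
    · exact ⟨l[0], List.getElem_mem _, mem_gN_pathG.2 (by
        rw [PathNbr, hget]; exact .inr (.inr ⟨by omega, h1 (by omega)⟩))⟩

theorem grundy_path_general (n : ℕ) (hn : 1 ≤ n) (C : Set ℕ) :
    (GoodConf C 1 n → grundy (pathG n) {v : ↥(Set.Icc 1 n) | (v : ℕ) ∈ C} = n) ∧
    (¬ GoodConf C 1 n → grundy (pathG n) {v : ↥(Set.Icc 1 n) | (v : ℕ) ∈ C} = n - 1) := by
  have hcard : Fintype.card (Set.Icc 1 n) = n := by simp
  have hgood : grundy (pathG n) {v : ↥(Set.Icc 1 n) | (v : ℕ) ∈ C} = n ↔ GoodConf C 1 n :=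
    calc _ ↔ grundy (pathG n) {v : ↥(Set.Icc 1 n) | (v : ℕ) ∈ C} = Fintype.card (Set.Icc 1 n) :=
          by rw [hcard]
      _ ↔ _ := grundy_eq_card_iff
      _ ↔ _ := exists_isPerfectWitness_pathG_iff
      _ ↔ _ := ⟨fun ⟨_, _, h⟩ => h.goodConf hn, GoodConf.exists_pathWitness⟩
  refine ⟨hgood.2, fun hbad => ?_⟩
  have := hcard ▸ grundy_le_card (G := pathG n) (C := {v : ↥(Set.Icc 1 n) | (v : ℕ) ∈ C})
  have := sub_one_le_grundy_pathG hbad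
  have := mt hgood.1 hbad
  omega

/-- For the path `P_n` (`n ≥ 1`): if `C` is a good configuration then
`γ_gr(P_n;C) = n`, and otherwise `γ_gr(P_n;C) = n − 1`. -/
theorem grundy_path (n : ℕ) (hn : 1 ≤ n) (C : Set ℕ) (hC : C ⊆ Set.Icc 1 n)
    (hiso : ∀ v : ↥(Set.Icc 1 n), (v : ℕ) ∉ C → ∃ w, (pathG n).Adj v w) :
    (GoodConf C 1 n → grundy (pathG n) {v : ↥(Set.Icc 1 n) | (v : ℕ) ∈ C} = n) ∧
    (¬ GoodConf C 1 n → grundy (pathG n) {v : ↥(Set.Icc 1 n) | (v : ℕ) ∈ C} = n - 1) :=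
  grundy_path_general n hn C

end LegalSeq
end

section
/- Assume G is connected, n ≥ 3, and (G;C) is twin free. Then the polytope P = P(G;C) is full dimensional; that is, the affine span of P is all of ℝ^{V×{1,…,m}} × ℝ^{V×{1,…,m}} (equivalently, P has affine dimension 2nm). -/
open Finset

namespace LegalSeq

variable {V : Type*}

/-- The ambient space `ℝ^{V×{1,…,m}} × ℝ^{V×{1,…,m}}` of the polytope of legal sequences. -/
abbrev Pt (V : Type*) (m : ℕ) := (V × Fin m → ℝ) × (V × Fin m → ℝ)

/-- Feasible 0/1 pairs `(x, y)` of the formulation `F₁` (constraints (1)-(5)). -/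
def Feasible [Fintype V] (G : SimpleGraph V) (C : Set V) (m : ℕ) : Set (Pt V m) :=
  { p | (∀ q, p.1 q = 0 ∨ p.1 q = 1) ∧ (∀ q, p.2 q = 0 ∨ p.2 q = 1) ∧
    (∀ i : Fin m, ∑ v : V, p.2 (v, i) ≤ 1) ∧
    (∀ v : V, ∑ i : Fin m, p.2 (v, i) ≤ 1) ∧
    (∀ (v : V) (i : Fin m) (h : i.1 + 1 < m),
        p.2 (v, ⟨i.1 + 1, h⟩) ≤ ∑ u ∈ gN G C v, (p.1 (u, i) - p.1 (u, ⟨i.1 + 1, h⟩))) ∧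
    (∀ (u : V) (i : Fin m), p.1 (u, i) + ∑ v ∈ gN G C u, p.2 (v, i) ≤ 1) ∧
    (∀ (u : V) (i : Fin m) (h : i.1 + 1 < m), p.1 (u, ⟨i.1 + 1, h⟩) ≤ p.1 (u, i)) }

/-- The polytope of legal sequences: the convex hull of the feasible 0/1 pairs. -/
noncomputable def poly [Fintype V] (G : SimpleGraph V) (C : Set V) (m : ℕ) : Set (Pt V m) :=
  convexHull ℝ (Feasible G C m)

/-- The instance `(G;C)` is twin free if distinct vertices have distinct
generalized neighborhoods. -/
def TwinFree [Fintype V] (G : SimpleGraph V) (C : Set V) : Prop :=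
  ∀ u v : V, u ≠ v → gN G C u ≠ gN G C v

/-- The inequality `f p ≤ a` is valid for the polytope and the face it defines has affine
dimension `2nm - 1`, i.e. it is facet-defining. -/
def IsFacet [Fintype V] (G : SimpleGraph V) (C : Set V) (m : ℕ)
    (f : Pt V m → ℝ) (a : ℝ) : Prop :=
  (∀ p ∈ poly G C m, f p ≤ a) ∧
  Module.finrank ℝ ((affineSpan ℝ {p ∈ poly G C m | f p = a}).direction) =
    2 * Fintype.card V * m - 1

lemma mem_gN_of_mem [Fintype V] {G : SimpleGraph V} {C : Set V} {v : V} (hv : v ∈ C) :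
    v ∈ gN G C v := by
  simp [gN, Set.Finite.mem_toFinset, hv]

lemma mem_gN_of_adj [Fintype V] {G : SimpleGraph V} {C : Set V} {v z : V} (h : G.Adj v z) :
    z ∈ gN G C v := by
  classical
  simp only [gN, Set.Finite.mem_toFinset]
  split_ifs <;> simp [h]

lemma zero_feas [Fintype V] (G : SimpleGraph V) (C : Set V) (m : ℕ) :
    (0 : Pt V m) ∈ Feasible G C m := by
  refine ⟨fun q => Or.inl rfl, fun q => Or.inl rfl, ?_, ?_, ?_, ?_, ?_⟩ <;>
    simp [Feasible]

lemma A_feas [Fintype V] [DecidableEq V] (G : SimpleGraph V) (C : Set V) (m : ℕ)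
    (u : V) (k : ℕ) :
    ((fun q : V × Fin m => if q.1 = u ∧ q.2.1 ≤ k then (1:ℝ) else 0),
      (0 : V × Fin m → ℝ)) ∈ Feasible G C m := by
  refine ⟨?_, fun q => Or.inl rfl, ?_, ?_, ?_, ?_, ?_⟩
  · intro q; dsimp only; split_ifs <;> simp
  · intro i; simp
  · intro v; simp
  · intro v i h
    simp only [Pi.zero_apply]
    refine Finset.sum_nonneg fun w _ => ?_
    split_ifs with h1 h2 h2 <;> simp_all <;> omega
  · intro w i
    simp only [Pi.zero_apply, Finset.sum_const_zero, add_zero]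
    split_ifs <;> norm_num
  · intro w i h
    dsimp only
    split_ifs with h1 h2 <;> simp_all <;> omega

lemma B_feas [Fintype V] [DecidableEq V] (G : SimpleGraph V) (C : Set V) (m : ℕ)
    (v : V) (i : Fin m) (uu : V) (hu : uu ∈ gN G C v) :
    ((fun q : V × Fin m => if q.1 = uu ∧ q.2.1 < i.1 then (1:ℝ) else 0),
     (fun q : V × Fin m => if q.1 = v ∧ q.2.1 = i.1 then (1:ℝ) else 0)) ∈ Feasible G C m := by
  have ysum : ∀ j : Fin m,
      (∑ w : V, if w = v ∧ j.1 = i.1 then (1:ℝ) else 0) ≤ 1 := by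
    intro j
    by_cases hj : j.1 = i.1
    · simp [hj]
    · simp [hj]
  refine ⟨?_, ?_, ?_, ?_, ?_, ?_, ?_⟩
  · intro q; dsimp only; split_ifs <;> simp
  · intro q; dsimp only; split_ifs <;> simp
  · intro j; exact ysum j
  · intro w
    by_cases hw : w = v
    · subst hw; dsimp only; simp [Fin.val_inj]
    · simp [hw]
  · intro w j h
    dsimp only
    by_cases hL : w = v ∧ j.1 + 1 = i.1
    · obtain ⟨rfl, hji⟩ := hL
      have hterm : ∀ u' ∈ gN G C w,
          (0:ℝ) ≤ (if u' = uu ∧ j.1 < i.1 then (1:ℝ) else 0) -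
            (if u' = uu ∧ j.1 + 1 < i.1 then (1:ℝ) else 0) := by
        intro u' _; split_ifs <;> simp_all <;> omega
      have h1 : ((if uu = uu ∧ j.1 < i.1 then (1:ℝ) else 0) -
            (if uu = uu ∧ j.1 + 1 < i.1 then (1:ℝ) else 0)) = 1 := by
        have h2 : j.1 < i.1 := by omega
        have h3 : ¬ (j.1 + 1 < i.1) := by omega
        simp [h2, h3]
      have hle := Finset.single_le_sum hterm hu
      rw [if_pos ⟨rfl, hji⟩]
      linarith
    · rw [if_neg hL]
      refine Finset.sum_nonneg fun u' _ => ?_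
      split_ifs <;> simp_all <;> omega
  · intro w j
    dsimp only
    by_cases hx : w = uu ∧ j.1 < i.1
    · have hji : ¬ (j.1 = i.1) := by omega
      have hz : (∑ v' ∈ gN G C w, if v' = v ∧ j.1 = i.1 then (1:ℝ) else 0) = 0 :=
        Finset.sum_eq_zero fun v' _ => by simp [hji]
      rw [if_pos hx, hz]; norm_num
    · have h1 : (∑ v' ∈ gN G C w, if v' = v ∧ j.1 = i.1 then (1:ℝ) else 0)
          ≤ ∑ v' : V, if v' = v ∧ j.1 = i.1 then (1:ℝ) else 0 := by
        refine Finset.sum_le_sum_of_subset_of_nonneg (Finset.subset_univ _)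
          fun w' _ _ => by split_ifs <;> norm_num
      have := ysum j
      rw [if_neg hx, zero_add]
      linarith
  · intro w j h
    dsimp only
    split_ifs with h1 h2 <;> simp_all <;> omega

lemma single_x_mem [Fintype V] [DecidableEq V] (G : SimpleGraph V) (C : Set V) (m : ℕ)
    (q : V × Fin m) :
    ((Pi.single q 1, 0) : Pt V m) ∈ Submodule.span ℝ (Feasible G C m) := by
  obtain ⟨u, i⟩ := q
  rcases Nat.eq_zero_or_pos i.1 with h0 | h0
  · have heq : ((Pi.single (u,i) 1, 0) : Pt V m)
        = ((fun q : V × Fin m => if q.1 = u ∧ q.2.1 ≤ 0 then (1:ℝ) else 0), 0) := by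
      refine Prod.ext_iff.mpr ⟨?_, rfl⟩
      funext q
      dsimp only
      rw [Pi.single_apply]
      by_cases hq : q = (u, i)
      · subst hq; simp [h0]
      · rw [if_neg hq, if_neg]
        rintro ⟨ha, hb⟩
        have h2 : q.2 = i := Fin.ext (by omega)
        exact hq (Prod.ext_iff.mpr ⟨ha, h2⟩)
    rw [heq]
    exact Submodule.subset_span (A_feas G C m u 0)
  · have hmem := Submodule.sub_mem _
      (Submodule.subset_span (R := ℝ) (A_feas G C m u i.1))
      (Submodule.subset_span (R := ℝ) (A_feas G C m u (i.1 - 1)))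
    have heq : ((Pi.single (u,i) 1, 0) : Pt V m)
        = ((fun q : V × Fin m => if q.1 = u ∧ q.2.1 ≤ i.1 then (1:ℝ) else 0),
            (0 : V × Fin m → ℝ))
          - ((fun q : V × Fin m => if q.1 = u ∧ q.2.1 ≤ i.1 - 1 then (1:ℝ) else 0), 0) := by
      refine Prod.ext_iff.mpr ⟨?_, by simp⟩
      funext q
      simp only [Prod.fst_sub, Pi.sub_apply, Pi.single_apply]
      by_cases hq : q = (u, i)
      · subst hq
        have h2 : ¬ (i.1 ≤ i.1 - 1) := by omega
        simp [h2]
      · rw [if_neg hq]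
        by_cases h1 : q.1 = u ∧ q.2.1 ≤ i.1
        · by_cases h2 : q.2.1 ≤ i.1 - 1
          · simp [h1, h2]
          · exfalso
            have h3 : q.2 = i := Fin.ext (by omega)
            exact hq (Prod.ext_iff.mpr ⟨h1.1, h3⟩)
        · have h2 : ¬ (q.1 = u ∧ q.2.1 ≤ i.1 - 1) := by
            rintro ⟨ha, hb⟩; exact h1 ⟨ha, by omega⟩
          rw [if_neg h1, if_neg h2]; norm_num
    rw [heq]
    exact hmem

lemma xpart_mem [Fintype V] [DecidableEq V] (G : SimpleGraph V) (C : Set V) (m : ℕ)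
    (f : V × Fin m → ℝ) :
    ((f, 0) : Pt V m) ∈ Submodule.span ℝ (Feasible G C m) := by
  have heq : ((f, 0) : Pt V m) = ∑ q : V × Fin m, f q • ((Pi.single q 1, 0) : Pt V m) := by
    refine Prod.ext_iff.mpr ⟨?_, ?_⟩
    · rw [Prod.fst_sum]
      funext r
      simp only [Prod.smul_mk, Finset.sum_apply, Pi.smul_apply, Pi.single_apply,
        smul_eq_mul, mul_ite, mul_one, mul_zero]
      simp
    · rw [Prod.snd_sum]
      simp
  rw [heq]
  exact Submodule.sum_mem _ fun q _ =>
    Submodule.smul_mem _ _ (single_x_mem G C m q)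

lemma single_y_mem [Fintype V] [DecidableEq V] (G : SimpleGraph V) (C : Set V) (m : ℕ)
    (hiso : ∀ w : V, w ∉ C → ∃ z, G.Adj w z) (q : V × Fin m) :
    ((0, Pi.single q 1) : Pt V m) ∈ Submodule.span ℝ (Feasible G C m) := by
  obtain ⟨v, i⟩ := q
  obtain ⟨uu, hu⟩ : ∃ uu, uu ∈ gN G C v := by
    by_cases hv : v ∈ C
    · exact ⟨v, mem_gN_of_mem hv⟩
    · obtain ⟨z, hz⟩ := hiso v hv
      exact ⟨z, mem_gN_of_adj hz⟩
  have hB := Submodule.subset_span (R := ℝ) (B_feas G C m v i uu hu)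
  have hx := xpart_mem G C m (fun q : V × Fin m => if q.1 = uu ∧ q.2.1 < i.1 then (1:ℝ) else 0)
  have hmem := Submodule.sub_mem _ hB hx
  have heq : ((0, Pi.single (v,i) 1) : Pt V m)
      = ((fun q : V × Fin m => if q.1 = uu ∧ q.2.1 < i.1 then (1:ℝ) else 0),
         (fun q : V × Fin m => if q.1 = v ∧ q.2.1 = i.1 then (1:ℝ) else 0))
        - ((fun q : V × Fin m => if q.1 = uu ∧ q.2.1 < i.1 then (1:ℝ) else 0), 0) := by
    refine Prod.ext_iff.mpr ⟨by simp, ?_⟩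
    simp only [Prod.snd_sub, sub_zero]
    funext q
    rw [Pi.single_apply]
    by_cases hq : q = (v, i)
    · subst hq; simp
    · rw [if_neg hq, if_neg]
      rintro ⟨ha, hb⟩
      have h2 : q.2 = i := Fin.ext hb
      exact hq (Prod.ext_iff.mpr ⟨ha, h2⟩)
  rw [heq]
  exact hmem

lemma ypart_mem [Fintype V] [DecidableEq V] (G : SimpleGraph V) (C : Set V) (m : ℕ)
    (hiso : ∀ w : V, w ∉ C → ∃ z, G.Adj w z) (g : V × Fin m → ℝ) :
    ((0, g) : Pt V m) ∈ Submodule.span ℝ (Feasible G C m) := by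
  have heq : ((0, g) : Pt V m) = ∑ q : V × Fin m, g q • ((0, Pi.single q 1) : Pt V m) := by
    refine Prod.ext_iff.mpr ⟨?_, ?_⟩
    · rw [Prod.fst_sum]; simp
    · rw [Prod.snd_sum]
      funext r
      simp only [Prod.smul_mk, Finset.sum_apply, Pi.smul_apply, Pi.single_apply,
        smul_eq_mul, mul_ite, mul_one, mul_zero]
      simp
  rw [heq]
  exact Submodule.sum_mem _ fun q _ =>
    Submodule.smul_mem _ _ (single_y_mem G C m hiso q)

/-- For `G` connected with `n ≥ 3` and `(G;C)` twin free (and no isolated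
vertex outside `C`), the polytope `P(G;C)` is full dimensional: its affine span is the whole
ambient space. -/
theorem poly_fullDim [Fintype V] (G : SimpleGraph V) (C : Set V)
    (hconn : G.Connected) (hcard : 3 ≤ Fintype.card V)
    (hiso : ∀ w : V, w ∉ C → ∃ z, G.Adj w z)
    (htf : TwinFree G C)
    (m : ℕ) (hm : m = Fintype.card V - gdelta G C + 1) :
    affineSpan ℝ (poly G C m) = ⊤ := by
  classical
  rw [poly, affineSpan_convexHull]
  have h0 : (0 : Pt V m) ∈ Feasible G C m := zero_feas G C m
  rw [AffineSubspace.affineSpan_eq_top_iff_vectorSpan_eq_top_of_nonempty ℝ (Pt V m) (Pt V m) ⟨0, h0⟩]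
  have hspan : Submodule.span ℝ (Feasible G C m) ≤ vectorSpan ℝ (Feasible G C m) := by
    rw [Submodule.span_le]
    intro p hp
    simpa using vsub_mem_vectorSpan ℝ hp h0
  have htop : Submodule.span ℝ (Feasible G C m) = ⊤ := by
    rw [eq_top_iff]
    intro p _
    have hp : p = (p.1, 0) + (0, p.2) := by
      refine Prod.ext_iff.mpr ⟨?_, ?_⟩ <;> simp
    rw [hp]
    exact Submodule.add_mem _ (xpart_mem G C m p.1) (ypart_mem G C m hiso p.2)
  rw [eq_top_iff, ← htop]
  exact hspan


end LegalSeq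
end

section
/- Assume G is connected, n ≥ 3, and (G;C) is twin free. Let π^x·x + π^y·y ≤ π₀ be a facet-defining inequality for P, let v ∈ V and j ∈ {1,…,m}, and suppose the facet F = {(x,y) ∈ P : π^x·x + π^y·y = π₀} is different from the face {(x,y) ∈ P : y_{v,j} = 0}. Then π^y_{v,j} ≥ 0. -/
/-! Suppose `π^y_{v,j} < 0`. A feasible point on the facet with `y_{v,j} = 1` would stay feasible
after zeroing that coordinate, and the inequality would then be violated; since every point of
the facet is a convex combination of feasible points on the facet, all of it lies in the
hyperplane `y_{v,j} = 0`. A facet spans a hyperplane, so its affine span is `{y_{v,j} = 0}`, and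
the facet is the whole face `{(x,y) ∈ P : y_{v,j} = 0}`. -/

open Finset

section Faces

variable {E : Type*} [AddCommGroup E] [Module ℝ E]

theorem exists_mem_apply_eq_apply_ne_zero_of_mem_convexHull {S : Set E} {f g : E →ₗ[ℝ] ℝ}
    {a : ℝ} (hS : ∀ z ∈ S, f z ≤ a) {p : E} (hp : p ∈ convexHull ℝ S) (hfp : f p = a)
    (hgp : g p ≠ 0) : ∃ z ∈ S, f z = a ∧ g z ≠ 0 := by
  classical
  rw [_root_.convexHull_eq] at hp
  obtain ⟨ι, t, w, z, hw0, hw1, hzS, hp⟩ := hp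
  rw [Finset.centerMass_eq_of_sum_1 t z hw1] at hp
  subst hp
  -- `a` is the `w`-average of the values `f (z i) ≤ a`, so each `z i` of positive weight attains it
  have hslack : ∑ i ∈ t, w i * (a - f (z i)) = 0 := by
    simp only [mul_sub, Finset.sum_sub_distrib, ← Finset.sum_mul, hw1, one_mul, ← hfp, map_sum,
      map_smul, smul_eq_mul, sub_self]
  have htight := (Finset.sum_eq_zero_iff_of_nonneg fun i hi =>
    mul_nonneg (hw0 i hi) (sub_nonneg.mpr (hS _ (hzS i hi)))).mp hslack
  rw [map_sum] at hgp
  obtain ⟨i, hi, hwg⟩ := Finset.exists_ne_zero_of_sum_ne_zero hgp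
  rw [map_smul, smul_eq_mul] at hwg
  refine ⟨z i, hzS i hi, ?_, right_ne_zero_of_mul hwg⟩
  linarith [(mul_eq_zero.mp (htight i hi)).resolve_left (left_ne_zero_of_mul hwg)]

theorem nonempty_of_finrank_direction_affineSpan_pos {s : Set E}
    (h : 0 < Module.finrank ℝ (affineSpan ℝ s).direction) : s.Nonempty := by
  contrapose! h
  rw [h, AffineSubspace.span_empty, AffineSubspace.direction_bot, finrank_bot]

variable [FiniteDimensional ℝ E]

theorem sep_eq_sep_ker_of_finrank_direction_eq {P : Set E} {f g : E →ₗ[ℝ] ℝ} {a : ℝ}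
    (hg : g ≠ 0) (hne : {p ∈ P | f p = a}.Nonempty)
    (hdim : Module.finrank ℝ (affineSpan ℝ {p ∈ P | f p = a}).direction =
      Module.finrank ℝ E - 1)
    (hker : ∀ p ∈ P, f p = a → g p = 0) :
    {p ∈ P | f p = a} = {p ∈ P | g p = 0} := by
  set F := {p ∈ P | f p = a}
  have hspan_le : affineSpan ℝ F ≤ (LinearMap.ker g).toAffineSubspace :=
    affineSpan_le.mpr fun p hp => hker p hp.1 hp.2
  have hspan_eq : affineSpan ℝ F = (LinearMap.ker g).toAffineSubspace := by
    refine AffineSubspace.eq_of_direction_eq_of_nonempty_of_le ?_ (hne.mono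
      (subset_affineSpan ℝ F)) hspan_le
    have hdir_le := AffineSubspace.direction_le hspan_le
    rw [Submodule.toAffineSubspace_direction] at hdir_le ⊢
    refine Submodule.eq_of_le_of_finrank_le hdir_le ?_
    have : Module.finrank ℝ (LinearMap.ker g) < Module.finrank ℝ E :=
      Submodule.finrank_lt (by rwa [Ne, LinearMap.ker_eq_top])
    omega
  have hspan_level : affineSpan ℝ F ≤ (affineSpan ℝ {a}).comap f.toAffineMap :=
    affineSpan_le.mpr fun p hp => by simp [hp.2]
  refine Set.Subset.antisymm (fun p hp => ⟨hp.1, hker p hp.1 hp.2⟩) fun p hp => ⟨hp.1, ?_⟩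
  have hp_span : p ∈ affineSpan ℝ F := by
    rw [hspan_eq]
    exact hp.2
  simpa using hspan_level hp_span

end Faces

namespace LegalSeq

variable {V : Type*} {m : ℕ}

def yCoord (w : V × Fin m) : Pt V m →ₗ[ℝ] ℝ :=
  (LinearMap.proj w).comp (LinearMap.snd ℝ _ _)

@[simp]
theorem yCoord_apply (w : V × Fin m) (p : Pt V m) : yCoord w p = p.2 w := rfl

theorem yCoord_ne_zero (w : V × Fin m) : yCoord w ≠ 0 := fun h => by
  classical
  simpa using LinearMap.congr_fun h (0, Pi.single w 1)

section Fintype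

variable [Fintype V]

theorem finrank_pt : Module.finrank ℝ (Pt V m) = 2 * Fintype.card V * m := by
  rw [Module.finrank_prod, Module.finrank_fintype_fun_eq_card, Fintype.card_prod,
    Fintype.card_fin]
  ring

noncomputable def linearForm (πx πy : V × Fin m → ℝ) : Pt V m →ₗ[ℝ] ℝ where
  toFun p := (∑ q, πx q * p.1 q) + (∑ q, πy q * p.2 q)
  map_add' p p' := by
    simp only [Prod.fst_add, Prod.snd_add, Pi.add_apply, mul_add, Finset.sum_add_distrib]
    ring
  map_smul' c p := by
    simp only [Prod.smul_fst, Prod.smul_snd, Pi.smul_apply, smul_eq_mul, RingHom.id_apply,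
      mul_add, Finset.mul_sum, mul_left_comm]

variable [DecidableEq V]

theorem linearForm_update_snd (πx πy : V × Fin m → ℝ) (p : Pt V m) (w : V × Fin m) :
    linearForm πx πy (p.1, Function.update p.2 w 0) = linearForm πx πy p - πy w * p.2 w := by
  simp only [linearForm, LinearMap.coe_mk, AddHom.coe_mk, add_sub_assoc, add_right_inj]
  simp [Function.update_apply, mul_ite, Finset.sum_ite, Finset.filter_ne']

theorem update_snd_mem_feasible {G : SimpleGraph V} {C : Set V} {p : Pt V m}
    (hp : p ∈ Feasible G C m) (w : V × Fin m) :
    (p.1, Function.update p.2 w 0) ∈ Feasible G C m := by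
  obtain ⟨h1, h2, h3, h4, h5, h6, h7⟩ := hp
  have hle : ∀ q, Function.update p.2 w 0 q ≤ p.2 q := by
    intro q
    rcases eq_or_ne q w with rfl | hq
    · rcases h2 q with h | h <;> simp [h]
    · simp [Function.update_of_ne hq]
  refine ⟨h1, fun q => ?_, fun i => ?_, fun u => ?_, fun u i h => ?_, fun u i => ?_, h7⟩
  · rcases eq_or_ne q w with rfl | hq
    · simp
    · simpa [Function.update_of_ne hq] using h2 q
  · exact (Finset.sum_le_sum fun u _ => hle (u, i)).trans (h3 i)
  · exact (Finset.sum_le_sum fun i _ => hle (u, i)).trans (h4 u)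
  · exact (hle _).trans (h5 u i h)
  · exact (add_le_add_right (Finset.sum_le_sum fun x _ => hle (x, i)) _).trans (h6 u i)

end Fintype

theorem facet_coeff_nonneg_general [Fintype V] (G : SimpleGraph V) (C : Set V)
    (m : ℕ)
    (πx πy : V × Fin m → ℝ) (π0 : ℝ)
    (hfacet : IsFacet G C m (fun p => (∑ q, πx q * p.1 q) + (∑ q, πy q * p.2 q)) π0)
    (v : V) (j : Fin m)
    (hdiff : {p ∈ poly G C m | (∑ q, πx q * p.1 q) + (∑ q, πy q * p.2 q) = π0} ≠
      {p ∈ poly G C m | p.2 (v, j) = 0}) :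
    0 ≤ πy (v, j) := by
  classical
  change IsFacet G C m (linearForm πx πy) π0 at hfacet
  change {p ∈ poly G C m | linearForm πx πy p = π0} ≠ _ at hdiff
  obtain ⟨hvalid, hdim⟩ := hfacet
  have hnm : 0 < Fintype.card V * m := Nat.mul_pos (Fintype.card_pos_iff.mpr ⟨v⟩) j.pos
  by_contra! hneg
  refine hdiff (sep_eq_sep_ker_of_finrank_direction_eq (f := linearForm πx πy)
    (yCoord_ne_zero (v, j)) (nonempty_of_finrank_direction_affineSpan_pos ?_) ?_ ?_)
  · rw [hdim, mul_assoc]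
    omega
  · rw [hdim, finrank_pt]
  intro p hp hLp
  by_contra hpy
  obtain ⟨z, hz, hLz, hzy⟩ := exists_mem_apply_eq_apply_ne_zero_of_mem_convexHull
    (fun z hz => hvalid z (subset_convexHull ℝ _ hz)) hp hLp hpy
  have hz1 : z.2 (v, j) = 1 := (hz.2.1 (v, j)).resolve_left hzy
  have hle := hvalid _ (subset_convexHull ℝ _ (update_snd_mem_feasible hz (v, j)))
  rw [linearForm_update_snd, hLz, hz1] at hle
  linarith

/-- If `π^x·x + π^y·y ≤ π₀` is facet-defining for `P` and the facet it
defines is different from the face `{(x,y) ∈ P : y_{v,j} = 0}`, then `π^y_{v,j} ≥ 0`. -/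
theorem facet_coeff_nonneg [Fintype V] (G : SimpleGraph V) (C : Set V)
    (hconn : G.Connected) (hcard : 3 ≤ Fintype.card V)
    (hiso : ∀ w : V, w ∉ C → ∃ z, G.Adj w z)
    (htf : TwinFree G C)
    (m : ℕ) (hm : m = Fintype.card V - gdelta G C + 1)
    (πx πy : V × Fin m → ℝ) (π0 : ℝ)
    (hfacet : IsFacet G C m (fun p => (∑ q, πx q * p.1 q) + (∑ q, πy q * p.2 q)) π0)
    (v : V) (j : Fin m)
    (hdiff : {p ∈ poly G C m | (∑ q, πx q * p.1 q) + (∑ q, πy q * p.2 q) = π0} ≠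
      {p ∈ poly G C m | p.2 (v, j) = 0}) :
    0 ≤ πy (v, j) :=
  facet_coeff_nonneg_general G C m πx πy π0 hfacet v j hdiff

end LegalSeq
end

section
/- Assume G is connected, n ≥ 3, and (G;C) is twin free. Then for every v ∈ V and every i ∈ {1,…,m}, the inequality y_{v,i} ≥ 0 is facet-defining for P. -/
open Finset

namespace LegalSeq

variable {V : Type*}

section Aux

variable [Fintype V] (G : SimpleGraph V) (C : Set V)

lemma gN_nonempty (hiso : ∀ w : V, w ∉ C → ∃ z, G.Adj w z) (w : V) :
    ∃ u, u ∈ gN G C w := by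
  classical
  by_cases hC : w ∈ C
  · refine ⟨w, ?_⟩
    simp only [gN, Set.Finite.mem_toFinset, if_pos hC]
    exact Set.mem_insert _ _
  · obtain ⟨z, hz⟩ := hiso w hC
    exact ⟨z, by simp [gN, hC, Set.Finite.mem_toFinset, hz]⟩

lemma ite_sub_nonneg {c1 c2 : Prop} [Decidable c1] [Decidable c2] (h : c2 → c1) :
    (0:ℝ) ≤ (if c1 then 1 else 0) - (if c2 then 1 else 0) := by
  split_ifs with h1 h2 h2
  · norm_num
  · norm_num
  · exact absurd (h h2) h1
  · norm_num

lemma ite_le_ite_of_imp {c1 c2 : Prop} [Decidable c1] [Decidable c2] (h : c2 → c1) :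
    (if c2 then (1:ℝ) else 0) ≤ (if c1 then 1 else 0) := by
  split_ifs with h1 h2 h2
  · norm_num
  · exact absurd (h h1) h2
  · norm_num
  · norm_num

/-- The point with `x_{u,k} = 1` for `k ≤ j` (single vertex `u`), `y = 0`. -/
def Xpt [DecidableEq V] (m : ℕ) (u : V) (j : Fin m) : Pt V m :=
  (fun q => if q.1 = u ∧ q.2.1 ≤ j.1 then 1 else 0, 0)

/-- The point with `y_{w,j} = 1` and `x_{u₀,k} = 1` for `k + 1 ≤ j`. -/
def Ypt [DecidableEq V] (m : ℕ) (u₀ w : V) (j : Fin m) : Pt V m :=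
  (fun q => if q.1 = u₀ ∧ q.2.1 + 1 ≤ j.1 then 1 else 0,
   fun q => if q = (w, j) then 1 else 0)

lemma zero_feasible (m : ℕ) : (0 : Pt V m) ∈ Feasible G C m := by
  refine ⟨fun q => Or.inl rfl, fun q => Or.inl rfl, ?_, ?_, ?_, ?_, ?_⟩ <;>
    intros <;> simp

lemma Xpt_feasible [DecidableEq V] (m : ℕ) (u : V) (j : Fin m) :
    Xpt m u j ∈ Feasible G C m := by
  refine ⟨?_, ?_, ?_, ?_, ?_, ?_, ?_⟩
  · intro q; simp only [Xpt]; split <;> simp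
  · intro q; exact Or.inl rfl
  · intro i'; simp [Xpt]
  · intro w; simp [Xpt]
  · intro w i' h
    simp only [Xpt]
    refine le_trans (by norm_num) (Finset.sum_nonneg fun z _ => ?_)
    exact ite_sub_nonneg fun hc => ⟨hc.1, by omega⟩
  · intro u' i'
    simp only [Xpt]
    split <;> simp
  · intro u' i' h
    simp only [Xpt]
    exact ite_le_ite_of_imp fun hc => ⟨hc.1, by omega⟩

lemma Ypt_feasible [DecidableEq V] (m : ℕ) (u₀ w : V) (hu₀ : u₀ ∈ gN G C w)
    (j : Fin m) : Ypt m u₀ w j ∈ Feasible G C m := by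
  refine ⟨?_, ?_, ?_, ?_, ?_, ?_, ?_⟩
  · intro q; simp only [Ypt]; split <;> simp
  · intro q; simp only [Ypt]; split <;> simp
  · intro i'
    by_cases hij : i' = j
    · subst hij
      simp [Ypt, Prod.ext_iff]
    · simp [Ypt, Prod.ext_iff, hij]
  · intro w'
    by_cases hw : w' = w
    · subst hw
      simp [Ypt, Prod.ext_iff]
    · simp [Ypt, Prod.ext_iff, hw]
  · intro w' i' h
    simp only [Ypt]
    by_cases hc : w' = w ∧ i'.1 + 1 = j.1
    · obtain ⟨rfl, hij⟩ := hc
      have hterm : ∀ z ∈ gN G C w',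
          (0:ℝ) ≤ (if z = u₀ ∧ i'.1 + 1 ≤ j.1 then (1:ℝ) else 0) -
            (if z = u₀ ∧ i'.1 + 1 + 1 ≤ j.1 then 1 else 0) := by
        intro z _
        exact ite_sub_nonneg fun hc => ⟨hc.1, by omega⟩
      have h1 : (if (u₀ : V) = u₀ ∧ i'.1 + 1 ≤ j.1 then (1:ℝ) else 0) -
          (if (u₀ : V) = u₀ ∧ i'.1 + 1 + 1 ≤ j.1 then 1 else 0) = 1 := by
        rw [if_pos ⟨rfl, by omega⟩, if_neg (by rintro ⟨-, h2⟩; omega)]; norm_num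
      calc (if ((w' : V), (⟨i'.1 + 1, h⟩ : Fin m)) = (w', j) then (1:ℝ) else 0) ≤ 1 := by
            split <;> norm_num
        _ = _ := h1.symm
        _ ≤ _ := Finset.single_le_sum hterm hu₀
    · have hne : ((w' : V), (⟨i'.1 + 1, h⟩ : Fin m)) ≠ (w, j) := by
        intro heq
        rw [Prod.mk.injEq] at heq
        exact hc ⟨heq.1, by rw [← heq.2]⟩
      rw [if_neg hne]
      refine Finset.sum_nonneg fun z _ => ?_
      exact ite_sub_nonneg fun hc => ⟨hc.1, by omega⟩
  · intro u' i'
    simp only [Ypt]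
    by_cases hij : i' = j
    · subst hij
      rw [if_neg (by rintro ⟨-, h2⟩; omega)]
      have : ∑ z ∈ gN G C u', (if ((z : V), i') = (w, i') then (1:ℝ) else 0) ≤ 1 := by
        simp only [Prod.mk.injEq, and_true]
        by_cases hw : w ∈ gN G C u'
        · rw [Finset.sum_ite_eq' _ _ (fun _ => (1:ℝ)), if_pos hw]
        · rw [Finset.sum_ite_eq' _ _ (fun _ => (1:ℝ)), if_neg hw]; norm_num
      linarith
    · have hsum : ∑ z ∈ gN G C u', (if ((z : V), i') = (w, j) then (1:ℝ) else 0) = 0 := by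
        refine Finset.sum_eq_zero fun z _ => ?_
        rw [if_neg (by simp [Prod.ext_iff, hij])]
      rw [hsum]
      split <;> norm_num
  · intro u' i' h
    simp only [Ypt]
    exact ite_le_ite_of_imp fun hc => ⟨hc.1, by omega⟩

end Aux

/-- For `G` connected, `n ≥ 3`, `(G;C)` twin free: the inequality
`y_{v,i} ≥ 0` (i.e. `−y_{v,i} ≤ 0`) is facet-defining for `P`, for every `v` and `i`. -/
theorem y_nonneg_facet [Fintype V] (G : SimpleGraph V) (C : Set V)
    (hconn : G.Connected) (hcard : 3 ≤ Fintype.card V)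
    (hiso : ∀ w : V, w ∉ C → ∃ z, G.Adj w z)
    (htf : TwinFree G C)
    (m : ℕ) (hm : m = Fintype.card V - gdelta G C + 1)
    (v : V) (i : Fin m) :
    IsFacet G C m (fun p => -(p.2 (v, i))) 0 := by
  classical
  have hm1 : 1 ≤ m := i.pos
  -- The linear functional p ↦ p.2 (v, i)
  set φ : Pt V m →ₗ[ℝ] ℝ :=
    { toFun := fun p => p.2 (v, i)
      map_add' := fun _ _ => rfl
      map_smul' := fun _ _ => rfl } with hφ
  constructor
  · -- validity
    intro p hp
    have hsub : poly G C m ⊆ {p : Pt V m | 0 ≤ p.2 (v, i)} := by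
      refine convexHull_min ?_ ?_
      · intro p hp
        rcases hp.2.1 (v, i) with h | h <;> simp [h]
      · intro a ha b hb s t hs ht hst
        have : (s • a + t • b).2 (v, i) = s * a.2 (v, i) + t * b.2 (v, i) := rfl
        simp only [Set.mem_setOf_eq] at ha hb ⊢
        rw [this]
        have := mul_nonneg hs ha
        have := mul_nonneg ht hb
        linarith
    have := hsub hp
    simp only [Set.mem_setOf_eq] at this
    show -(p.2 (v, i)) ≤ 0
    linarith
  · -- dimension of the face
    set F : Set (Pt V m) := {p ∈ poly G C m | -(p.2 (v, i)) = 0} with hF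
    -- points of the face
    have hmemF : ∀ p ∈ Feasible G C m, p.2 (v, i) = 0 → p ∈ F := by
      intro p hp h0
      exact ⟨subset_convexHull ℝ _ hp, by simp [h0]⟩
    have h0F : (0 : Pt V m) ∈ F := hmemF 0 (zero_feasible G C m) rfl
    have hDmem : ∀ p ∈ F, p ∈ (affineSpan ℝ F).direction := by
      intro p hp
      have := AffineSubspace.vsub_mem_direction (mem_affineSpan ℝ hp)
        (mem_affineSpan ℝ h0F)
      simpa using this
    -- Xpt points belong to the direction
    have hX : ∀ (u : V) (j : Fin m), Xpt m u j ∈ (affineSpan ℝ F).direction := by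
      intro u j
      exact hDmem _ (hmemF _ (Xpt_feasible G C m u j) rfl)
    -- standard x basis vectors
    have hex : ∀ (u : V) (j : Fin m),
        ((fun q => if q = (u, j) then (1:ℝ) else 0, 0) : Pt V m) ∈
          (affineSpan ℝ F).direction := by
      intro u j
      rcases Nat.eq_zero_or_pos j.1 with hj0 | hjpos
      · have : ((fun q => if q = (u, j) then (1:ℝ) else 0, 0) : Pt V m) = Xpt m u j := by
          refine Prod.ext (funext fun q => ?_) rfl
          have hcond : (q = (u, j)) ↔ (q.1 = u ∧ q.2.1 ≤ j.1) := by
            constructor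
            · rintro rfl; exact ⟨rfl, le_refl _⟩
            · rintro ⟨h1, h2⟩
              refine Prod.ext h1 (Fin.ext ?_)
              show q.2.1 = j.1
              omega
          exact if_congr hcond rfl rfl
        rw [this]; exact hX u j
      · set j' : Fin m := ⟨j.1 - 1, lt_of_le_of_lt (Nat.sub_le _ _) j.2⟩ with hj'
        have hj'v : (j' : ℕ) = j.1 - 1 := rfl
        have heq : ((fun q => if q = (u, j) then (1:ℝ) else 0, 0) : Pt V m) =
            Xpt m u j - Xpt m u j' := by
          refine Prod.ext (funext fun q => ?_) (by simp [Xpt])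
          obtain ⟨w, k⟩ := q
          by_cases hw : w = u
          · subst hw
            simp only [Xpt, Prod.fst_sub, Pi.sub_apply, Prod.mk.injEq, Fin.ext_iff,
              eq_self_iff_true, true_and, hj'v]
            split_ifs <;> (try norm_num) <;> omega
          · simp [Xpt, Prod.ext_iff, hw]
        rw [heq]
        exact Submodule.sub_mem _ (hX u j) (hX u j')
    -- standard y basis vectors, away from (v, i)
    have hey : ∀ (w : V) (j : Fin m), (w, j) ≠ (v, i) →
        ((0, fun q => if q = (w, j) then (1:ℝ) else 0) : Pt V m) ∈
          (affineSpan ℝ F).direction := by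
      intro w j hne
      obtain ⟨u₀, hu₀⟩ := gN_nonempty G C hiso w
      have hYF : Ypt m u₀ w j ∈ F := by
        refine hmemF _ (Ypt_feasible G C m u₀ w hu₀ j) ?_
        simp only [Ypt]
        rw [if_neg (by exact fun h => hne (by rw [h]))]
      have hYD := hDmem _ hYF
      rcases Nat.eq_zero_or_pos j.1 with hj0 | hjpos
      · have : ((0, fun q => if q = (w, j) then (1:ℝ) else 0) : Pt V m) =
            Ypt m u₀ w j := by
          refine Prod.ext (funext fun q => ?_) rfl
          simp only [Ypt]
          rw [if_neg (by rintro ⟨-, h2⟩; omega)]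
          rfl
        rw [this]; exact hYD
      · set j' : Fin m := ⟨j.1 - 1, lt_of_le_of_lt (Nat.sub_le _ _) j.2⟩ with hj'
        have hj'v : (j' : ℕ) = j.1 - 1 := rfl
        have hxeq : ((0, fun q => if q = (w, j) then (1:ℝ) else 0) : Pt V m) =
            Ypt m u₀ w j - Xpt m u₀ j' := by
          refine Prod.ext (funext fun q => ?_) (funext fun q => ?_)
          · show (0:ℝ) = _
            simp only [Ypt, Xpt, Prod.fst_sub, Pi.sub_apply, hj'v]
            have hiff : (q.1 = u₀ ∧ q.2.1 + 1 ≤ j.1) ↔ (q.1 = u₀ ∧ q.2.1 ≤ j.1 - 1) := by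
              constructor
              · rintro ⟨h1, h2⟩; exact ⟨h1, by omega⟩
              · rintro ⟨h1, h2⟩; exact ⟨h1, by omega⟩
            rw [if_congr hiff rfl rfl, sub_self]
          · show (if q = (w, j) then (1:ℝ) else 0) = _
            simp only [Ypt, Xpt, Prod.snd_sub, Pi.sub_apply, Pi.zero_apply, sub_zero]
        rw [hxeq]
        exact Submodule.sub_mem _ hYD (hX u₀ j')
    -- the direction equals the kernel of φ
    have hdir : (affineSpan ℝ F).direction = LinearMap.ker φ := by
      apply le_antisymm
      · rw [direction_affineSpan, vectorSpan_def, Submodule.span_le]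
        rintro x hx
        rw [Set.mem_vsub] at hx
        obtain ⟨p, hp, q, hq, rfl⟩ := hx
        have hp0 : p.2 (v, i) = 0 := by have := hp.2; linarith [neg_eq_zero.mp this]
        have hq0 : q.2 (v, i) = 0 := by have := hq.2; linarith [neg_eq_zero.mp this]
        simp only [SetLike.mem_coe, LinearMap.mem_ker]
        show (p - q).2 (v, i) = 0
        have : (p - q).2 (v, i) = p.2 (v, i) - q.2 (v, i) := rfl
        rw [this, hp0, hq0, sub_zero]
      · intro p hp
        have hp0 : p.2 (v, i) = 0 := hp
        have hrw : p = (∑ q : V × Fin m,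
              p.1 q • ((fun q' => if q' = q then (1:ℝ) else 0, 0) : Pt V m)) +
            (∑ q : V × Fin m,
              p.2 q • ((0, fun q' => if q' = q then (1:ℝ) else 0) : Pt V m)) := by
          refine Prod.ext (funext fun q' => ?_) (funext fun q' => ?_)
          · show p.1 q' = ((∑ q : V × Fin m, _) + (∑ q : V × Fin m, _) : Pt V m).1 q'
            rw [Prod.fst_add, Prod.fst_sum, Prod.fst_sum]
            simp only [Prod.smul_fst, Pi.add_apply, Finset.sum_apply, Pi.smul_apply,
              smul_eq_mul, smul_zero, Pi.zero_apply, mul_ite, mul_one, mul_zero]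
            rw [Finset.sum_ite_eq _ q' (fun q => p.1 q)]
            simp
          · show p.2 q' = ((∑ q : V × Fin m, _) + (∑ q : V × Fin m, _) : Pt V m).2 q'
            rw [Prod.snd_add, Prod.snd_sum, Prod.snd_sum]
            simp only [Prod.smul_snd, Pi.add_apply, Finset.sum_apply, Pi.smul_apply,
              smul_eq_mul, smul_zero, Pi.zero_apply, mul_ite, mul_one, mul_zero]
            rw [Finset.sum_ite_eq _ q' (fun q => p.2 q)]
            simp
        rw [hrw]
        refine Submodule.add_mem _ (Submodule.sum_mem _ fun q _ => ?_)
          (Submodule.sum_mem _ fun q _ => ?_)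
        · exact Submodule.smul_mem _ _ (hex q.1 q.2)
        · by_cases hq : q = (v, i)
          · subst hq
            rw [hp0, zero_smul]
            exact Submodule.zero_mem _
          · refine Submodule.smul_mem _ _ ?_
            have := hey q.1 q.2 (by rwa [Prod.mk.eta])
            simpa using this
    -- compute the dimension of the kernel
    rw [hdir]
    have hsurj : Function.Surjective φ := by
      intro c
      exact ⟨(0, fun _ => c), rfl⟩
    have hrange : LinearMap.range φ = ⊤ := LinearMap.range_eq_top.mpr hsurj
    have hrk := LinearMap.finrank_range_add_finrank_ker φ
    rw [hrange] at hrk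
    have h1 : Module.finrank ℝ (⊤ : Submodule ℝ ℝ) = 1 := by
      rw [finrank_top]; exact Module.finrank_self ℝ
    have h2 : Module.finrank ℝ (Pt V m) = 2 * (Fintype.card V * m) := by
      rw [Module.finrank_prod, Module.finrank_fintype_fun_eq_card, Fintype.card_prod,
        Fintype.card_fin]
      ring
    rw [h1, h2] at hrk
    have hNpos : 0 < Fintype.card V * m := Nat.mul_pos (by omega) hm1
    have hgoal : 2 * Fintype.card V * m = 2 * (Fintype.card V * m) := by ring
    rw [hgoal]
    obtain ⟨N, hN⟩ : ∃ N, Fintype.card V * m = N := ⟨_, rfl⟩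
    rw [hN] at hrk hNpos ⊢
    have hker : Module.finrank ℝ (LinearMap.ker φ) = 2 * N - 1 := by omega
    exact hker

end LegalSeq
end

section
/- Let t ≥ 1 and W = {w₁,…,w_t} ⊆ V satisfy N⟨w_j⟩ ⊆ N⟨w₁⟩ for all j = 2,…,t (i.e., w₁ ⋪ w_j). Then for every i ∈ {1,…,m−1}, the inequality Σ_{w∈W} y_{w,i+1} ≤ Σ_{u∈N⟨w₁⟩} (x_{u,i} − x_{u,i+1}) is valid for P. -/
open Finset

namespace LegalSeq

variable {V : Type*}

/-- If `W ∋ w₁` and `N⟨w⟩ ⊆ N⟨w₁⟩` for every `w ∈ W`, then for every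
`i ∈ {1,…,m−1}` the inequality
`Σ_{w∈W} y_{w,i+1} ≤ Σ_{u∈N⟨w₁⟩} (x_{u,i} − x_{u,i+1})` is valid for `P`. -/
theorem nested_ineq_valid [Fintype V] (G : SimpleGraph V) (C : Set V)
    (hiso : ∀ w : V, w ∉ C → ∃ z, G.Adj w z)
    (m : ℕ) (hm : m = Fintype.card V - gdelta G C + 1)
    (W : Finset V) (w1 : V) (hw1 : w1 ∈ W)
    (hW : ∀ w ∈ W, gN G C w ⊆ gN G C w1)
    (i : Fin m) (h : i.1 + 1 < m) :
    ∀ p ∈ poly G C m,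
      ∑ w ∈ W, p.2 (w, ⟨i.1 + 1, h⟩) ≤
        ∑ u ∈ gN G C w1, (p.1 (u, i) - p.1 (u, ⟨i.1 + 1, h⟩)) := by
  classical
  set j : Fin m := ⟨i.1 + 1, h⟩ with hj
  have hfeas : ∀ p ∈ Feasible G C m,
      ∑ w ∈ W, p.2 (w, j) ≤ ∑ u ∈ gN G C w1, (p.1 (u, i) - p.1 (u, j)) := by
    rintro p ⟨hx01, hy01, h1, _, h3, _, h5⟩
    have hdiff : ∀ u : V, 0 ≤ p.1 (u, i) - p.1 (u, j) :=
      fun u => sub_nonneg.2 (h5 u i h)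
    by_cases hex : ∃ w0 ∈ W, p.2 (w0, j) = 1
    · obtain ⟨w0, hw0, hy⟩ := hex
      have h1' : ∑ w ∈ W, p.2 (w, j) ≤ 1 := by
        calc ∑ w ∈ W, p.2 (w, j) ≤ ∑ v : V, p.2 (v, j) :=
              Finset.sum_le_sum_of_subset_of_nonneg (Finset.subset_univ W)
                (fun v _ _ => by rcases hy01 (v, j) with hv | hv <;> simp [hv])
          _ ≤ 1 := h1 j
      have h2' : (1 : ℝ) ≤ ∑ u ∈ gN G C w0, (p.1 (u, i) - p.1 (u, j)) :=
        hy ▸ h3 w0 i h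
      calc ∑ w ∈ W, p.2 (w, j) ≤ 1 := h1'
        _ ≤ ∑ u ∈ gN G C w0, (p.1 (u, i) - p.1 (u, j)) := h2'
        _ ≤ ∑ u ∈ gN G C w1, (p.1 (u, i) - p.1 (u, j)) :=
            Finset.sum_le_sum_of_subset_of_nonneg (hW w0 hw0) (fun u _ _ => hdiff u)
    · push_neg at hex
      have hz : ∑ w ∈ W, p.2 (w, j) = 0 :=
        Finset.sum_eq_zero fun w hw => by
          rcases hy01 (w, j) with hv | hv
          · exact hv
          · exact absurd hv (hex w hw)
      rw [hz]
      exact Finset.sum_nonneg fun u _ => hdiff u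
  have hlin : IsLinearMap ℝ (fun q : Pt V m =>
      ∑ w ∈ W, q.2 (w, j) - ∑ u ∈ gN G C w1, (q.1 (u, i) - q.1 (u, j))) := by
    constructor
    · intro a b
      simp only [Prod.fst_add, Prod.snd_add, Pi.add_apply]
      rw [Finset.sum_add_distrib,
        show (∑ u ∈ gN G C w1, ((a.1 (u, i) + b.1 (u, i)) - (a.1 (u, j) + b.1 (u, j)))) =
            ∑ u ∈ gN G C w1, ((a.1 (u, i) - a.1 (u, j)) + (b.1 (u, i) - b.1 (u, j))) from
          Finset.sum_congr rfl fun u _ => by ring, Finset.sum_add_distrib]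
      ring
    · intro c a
      simp only [Prod.smul_fst, Prod.smul_snd, Pi.smul_apply, smul_eq_mul]
      rw [← Finset.mul_sum,
        show (∑ u ∈ gN G C w1, (c * a.1 (u, i) - c * a.1 (u, j))) =
            ∑ u ∈ gN G C w1, c * (a.1 (u, i) - a.1 (u, j)) from
          Finset.sum_congr rfl fun u _ => by ring, ← Finset.mul_sum]
      ring
  have hconv : Convex ℝ {q : Pt V m |
      ∑ w ∈ W, q.2 (w, j) - ∑ u ∈ gN G C w1, (q.1 (u, i) - q.1 (u, j)) ≤ 0} :=
    convex_halfSpace_le hlin 0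
  have hsub : poly G C m ⊆ {q : Pt V m |
      ∑ w ∈ W, q.2 (w, j) - ∑ u ∈ gN G C w1, (q.1 (u, i) - q.1 (u, j)) ≤ 0} :=
    convexHull_min (fun p hp => sub_nonpos.2 (hfeas p hp)) hconv
  intro p hp
  exact sub_nonpos.1 (hsub hp)

end LegalSeq
end
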